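/- Let E be a finite group having a subgroup D of index 2 with D isomorphic to the dihedral group D₈ of order 8. Then E is isomorphic to exactly one of the following four pairwise non-isomorphic groups: D₈ × C₂; the central product D₈ ∘ C₄ (the quotient of D₈ × C₄ by the order-2 subgroup generated by (s₁, c²), with c a generator of C₄ and s₁ the central involution of D₈); the dihedral group D₁₆ of order 16; and the semidihedral group SD₁₆ = ⟨x, y ∣ x⁸ = y² = 1, y x y⁻¹ = x³⟩. -/

import Mathlib

/-- The units of `ZMod q` act by multiplication; multiplicatively this gives
`(ZMod q)ˣ →* MulAut (Multiplicative (ZMod q))`. -/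
def zmodUnitsToMulAut (q : ℕ) : (ZMod q)ˣ →* MulAut (Multiplicative (ZMod q)) where
  toFun u := AddEquiv.toMultiplicative (DistribMulAction.toAddAut (ZMod q)ˣ (ZMod q) u)
  map_one' := by
    ext x
    simp [AddEquiv.toMultiplicative, DistribMulAction.toAddAut]
    rfl
  map_mul' u v := by
    ext x
    simp [AddEquiv.toMultiplicative, DistribMulAction.toAddAut, mul_smul]
    rfl

/-- The homomorphism from the cyclic group of order `2` sending the generator to a
given element `z` with `z ^ 2 = 1`. -/
def c2hom {G : Type*} [Group G] (z : G) (hz : z ^ 2 = 1) : Multiplicative (ZMod 2) →* G where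
  toFun a := z ^ (Multiplicative.toAdd a).val
  map_one' := by simp
  map_mul' a b := by
    show z ^ (Multiplicative.toAdd (a * b)).val = _
    rw [toAdd_mul, ZMod.val_add, ← pow_eq_pow_mod _ hz, pow_add]

lemma zmod_two_pow_self (n : ℕ) : (2 : ZMod (2 ^ n)) ^ n = 0 := by
  have h := ZMod.natCast_self (2 ^ n)
  push_cast at h
  exact h

lemma sd_val_sq (d : ℕ) (hd : 2 ≤ d) :
    ((2 : ZMod (2 ^ d)) ^ (d - 1) - 1) * ((2 : ZMod (2 ^ d)) ^ (d - 1) - 1) = 1 := by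
  have h0 : (2 : ZMod (2 ^ d)) ^ d = 0 := zmod_two_pow_self d
  have e1 : ((2 : ZMod (2 ^ d)) ^ (d - 1) - 1) * ((2 : ZMod (2 ^ d)) ^ (d - 1) - 1)
      = (2 : ZMod (2 ^ d)) ^ (d - 1) * (2 : ZMod (2 ^ d)) ^ (d - 1)
        - (2 : ZMod (2 ^ d)) * (2 : ZMod (2 ^ d)) ^ (d - 1) + 1 := by ring
  have e2 : (2 : ZMod (2 ^ d)) ^ (d - 1) * (2 : ZMod (2 ^ d)) ^ (d - 1)
      = (2 : ZMod (2 ^ d)) ^ (d - 2) * (2 : ZMod (2 ^ d)) ^ d := by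
    rw [← pow_add, ← pow_add]; congr 1; omega
  have e3 : (2 : ZMod (2 ^ d)) * (2 : ZMod (2 ^ d)) ^ (d - 1) = (2 : ZMod (2 ^ d)) ^ d := by
    rw [← pow_succ']; congr 1; omega
  rw [e1, e2, e3, h0, mul_zero, sub_zero, zero_add]

/-- The unit `2^(d-1) - 1` of `ZMod (2^d)`. -/
def sdUnit (d : ℕ) (hd : 2 ≤ d) : (ZMod (2 ^ d))ˣ :=
  ⟨(2 : ZMod (2 ^ d)) ^ (d - 1) - 1, (2 : ZMod (2 ^ d)) ^ (d - 1) - 1,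
    sd_val_sq d hd, sd_val_sq d hd⟩

lemma sdUnit_sq (d : ℕ) (hd : 2 ≤ d) : (sdUnit d hd) ^ 2 = 1 := by
  ext
  rw [Units.val_pow_eq_pow_val, Units.val_one, pow_two]
  exact sd_val_sq d hd

/-- The semidihedral group of order `2^(d+1)`:
`⟨x, y ∣ x^(2^d) = y² = 1, y x y⁻¹ = x^(2^(d-1) - 1)⟩`, realized as the semidirect
product of the cyclic group of order `2^d` by the cyclic group of order `2`, the
generator of the latter acting as multiplication by `2^(d-1) - 1`. -/
abbrev SemidihedralGroup (d : ℕ) (hd : 2 ≤ d) : Type :=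
  Multiplicative (ZMod (2 ^ d)) ⋊[(zmodUnitsToMulAut (2 ^ d)).comp
    (c2hom (sdUnit d hd) (sdUnit_sq d hd))] Multiplicative (ZMod 2)

/-- Group (a): the direct product `D_{2^d} × C₂`. -/
abbrev GroupA (d : ℕ) : Type := DihedralGroup (2 ^ (d - 1)) × Multiplicative (ZMod 2)

/-- The element `(s₁, c²)` of `D_{2^d} × C₄`, where `s₁` is the central involution of the
dihedral group and `c` generates `C₄`. -/
def cpGen (d : ℕ) : DihedralGroup (2 ^ (d - 1)) × Multiplicative (ZMod 4) :=
  (DihedralGroup.r ((2 ^ (d - 2) : ℕ) : ZMod (2 ^ (d - 1))), Multiplicative.ofAdd (2 : ZMod 4))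

lemma half_add_half (d : ℕ) :
    ((2 ^ (d - 2) : ℕ) : ZMod (2 ^ (d - 1))) + ((2 ^ (d - 2) : ℕ) : ZMod (2 ^ (d - 1))) = 0 := by
  match d with
  | 0 => decide
  | 1 => decide
  | (n + 2) =>
    show ((2 ^ n : ℕ) : ZMod (2 ^ (n + 1))) + ((2 ^ n : ℕ) : ZMod (2 ^ (n + 1))) = 0
    rw [← Nat.cast_add, show 2 ^ n + 2 ^ n = 2 ^ (n + 1) by ring, ZMod.natCast_self]

lemma cpGen_mem_center (d : ℕ) :
    cpGen d ∈ Subgroup.center (DihedralGroup (2 ^ (d - 1)) × Multiplicative (ZMod 4)) := by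
  rw [Subgroup.mem_center_iff]
  rintro ⟨g, c⟩
  refine Prod.ext ?_ (mul_comm _ _)
  show g * DihedralGroup.r _ = DihedralGroup.r _ * g
  have h := half_add_half d
  cases g with
  | r j => rw [DihedralGroup.r_mul_r, DihedralGroup.r_mul_r, add_comm]
  | sr j =>
    rw [DihedralGroup.sr_mul_r, DihedralGroup.r_mul_sr]
    congr 1
    rw [eq_comm, sub_eq_iff_eq_add, add_assoc, h, add_zero]

instance cpGen_zpowers_normal (d : ℕ) : (Subgroup.zpowers (cpGen d)).Normal := by
  constructor
  intro n hn g
  obtain ⟨k, rfl⟩ := hn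
  have hc : (cpGen d) ^ k ∈
      Subgroup.center (DihedralGroup (2 ^ (d - 1)) × Multiplicative (ZMod 4)) :=
    Subgroup.zpow_mem _ (cpGen_mem_center d) k
  have h := (Subgroup.mem_center_iff.mp hc) g
  have : g * (cpGen d) ^ k * g⁻¹ = (cpGen d) ^ k := by
    rw [h, mul_assoc, mul_inv_cancel, mul_one]
  rw [this]
  exact Subgroup.zpow_mem _ (Subgroup.mem_zpowers _) k

/-- Group (b): the central product `D_{2^d} ∘ C₄`, i.e. the quotient of `D_{2^d} × C₄`
by the order-2 subgroup generated by `(s₁, c²)`. -/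
abbrev GroupB (d : ℕ) : Type :=
  (DihedralGroup (2 ^ (d - 1)) × Multiplicative (ZMod 4)) ⧸ Subgroup.zpowers (cpGen d)

lemma ge_val_sq (d : ℕ) (hd : 3 ≤ d) :
    ((2 : ZMod (2 ^ (d - 1))) ^ (d - 2) + 1) * ((2 : ZMod (2 ^ (d - 1))) ^ (d - 2) + 1) = 1 := by
  have h0 : (2 : ZMod (2 ^ (d - 1))) ^ (d - 1) = 0 := zmod_two_pow_self (d - 1)
  have e1 : ((2 : ZMod (2 ^ (d - 1))) ^ (d - 2) + 1) * ((2 : ZMod (2 ^ (d - 1))) ^ (d - 2) + 1)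
      = (2 : ZMod (2 ^ (d - 1))) ^ (d - 2) * (2 : ZMod (2 ^ (d - 1))) ^ (d - 2)
        + (2 : ZMod (2 ^ (d - 1))) * (2 : ZMod (2 ^ (d - 1))) ^ (d - 2) + 1 := by ring
  have e2 : (2 : ZMod (2 ^ (d - 1))) ^ (d - 2) * (2 : ZMod (2 ^ (d - 1))) ^ (d - 2)
      = (2 : ZMod (2 ^ (d - 1))) ^ (d - 3) * (2 : ZMod (2 ^ (d - 1))) ^ (d - 1) := by
    rw [← pow_add, ← pow_add]; congr 1; omega
  have e3 : (2 : ZMod (2 ^ (d - 1))) * (2 : ZMod (2 ^ (d - 1))) ^ (d - 2)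
      = (2 : ZMod (2 ^ (d - 1))) ^ (d - 1) := by
    rw [← pow_succ']; congr 1; omega
  rw [e1, e2, e3, h0, mul_zero, add_zero, zero_add]

/-- The unit `2^(d-2) + 1` of `ZMod (2^(d-1))`. -/
def geUnit (d : ℕ) (hd : 3 ≤ d) : (ZMod (2 ^ (d - 1)))ˣ :=
  ⟨(2 : ZMod (2 ^ (d - 1))) ^ (d - 2) + 1, (2 : ZMod (2 ^ (d - 1))) ^ (d - 2) + 1,
    ge_val_sq d hd, ge_val_sq d hd⟩

lemma geUnit_sq (d : ℕ) (hd : 3 ≤ d) : (geUnit d hd) ^ 2 = 1 := by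
  ext
  rw [Units.val_pow_eq_pow_val, Units.val_one, pow_two]
  exact ge_val_sq d hd

/-- Group (e): the semidirect product
`C_{2^(d-1)} ⋊ (C₂ × C₂) = ⟨s, t, e ∣ s^(2^(d-1)) = t² = e² = 1, te = et,
t s t⁻¹ = s⁻¹, e s e⁻¹ = s^(2^(d-2)+1)⟩`,
the first `C₂` factor (generated by `t`) acting as inversion and the second (generated
by `e`) acting as multiplication by `2^(d-2) + 1`. -/
abbrev GroupE (d : ℕ) (hd : 3 ≤ d) : Type :=
  Multiplicative (ZMod (2 ^ (d - 1))) ⋊[(zmodUnitsToMulAut (2 ^ (d - 1))).comp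
    (MonoidHom.coprod (c2hom (-1 : (ZMod (2 ^ (d - 1)))ˣ) neg_one_sq)
      (c2hom (geUnit d hd) (geUnit_sq d hd)))]
    (Multiplicative (ZMod 2) × Multiplicative (ZMod 2))

/-! Here `|E| = 16` and `D` is normal. Since `Out(D₈)` has order `2`, an element `w ∉ D` can be
corrected by an element of `D` so that conjugation by `w` fixes the rotation `r` and sends the
reflection `s` to `s` or to `sr`. The square `w²` lies in `D`, and the centralizer conditions pin
it down: in the first case `w²` is central, so `w² ∈ {1, r²}`, giving `D₈ × C₂` or `D₈ ∘ C₄`; in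
the second `w²` conjugates `s` to `sr²`, so `w² ∈ {r, r³}`, giving `SD₁₆` (`s w s = w³`) or `D₁₆`
(`s w s = w⁻¹`). Each time the presentation yields a homomorphism from the model group onto `E`,
bijective by counting. The four models have `12`, `8`, `10` and `6` solutions of `x² = 1`. -/

open Multiplicative

section CyclicLift

variable {G : Type*} [Group G]

def zmodPowHom (n : ℕ) [NeZero n] (z : G) (hz : z ^ n = 1) : Multiplicative (ZMod n) →* G where
  toFun a := z ^ (toAdd a).val
  map_one' := by simp
  map_mul' a b := by
    rw [toAdd_mul, ZMod.val_add, ← pow_eq_pow_mod _ hz, pow_add]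

lemma zmodPowHom_ofAdd_natCast {n : ℕ} [NeZero n] {z : G} (hz : z ^ n = 1) (k : ℕ) :
    zmodPowHom n z hz (ofAdd (k : ZMod n)) = z ^ k := by
  rw [zmodPowHom, MonoidHom.coe_mk, OneHom.coe_mk, toAdd_ofAdd, ZMod.val_natCast,
    ← pow_eq_pow_mod _ hz]

@[simp] lemma zmodPowHom_ofAdd_one {n : ℕ} [NeZero n] {z : G} (hz : z ^ n = 1) :
    zmodPowHom n z hz (ofAdd 1) = z := by
  simpa using zmodPowHom_ofAdd_natCast hz 1

end CyclicLift

section CyclicByTwo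

variable {G : Type*} [Group G] {n : ℕ} [NeZero n] {w t : G}

@[simp] lemma c2hom_ofAdd_one (hw : w ^ 2 = 1) : c2hom w hw (ofAdd 1) = w := pow_one w

lemma zmodPowHom_units_smul (hw : w ^ n = 1) (u : (ZMod n)ˣ)
    (htw : t * w * t⁻¹ = w ^ (u : ZMod n).val) (x : Multiplicative (ZMod n)) :
    zmodPowHom n w hw (ofAdd (u • toAdd x)) = t * zmodPowHom n w hw x * t⁻¹ := by
  obtain ⟨k, rfl⟩ : ∃ k : ℕ, x = ofAdd (k : ZMod n) :=
    ⟨(toAdd x).val, by rw [ZMod.natCast_zmod_val, ofAdd_toAdd]⟩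
  conv_lhs => rw [toAdd_ofAdd, Units.smul_def, smul_eq_mul, ← ZMod.natCast_zmod_val (u : ZMod n),
    ← Nat.cast_mul]
  rw [zmodPowHom_ofAdd_natCast, zmodPowHom_ofAdd_natCast, pow_mul, ← htw, conj_pow]

def cyclicByTwoLift (u : (ZMod n)ˣ) (hu : u ^ 2 = 1) (hw : w ^ n = 1) (ht : t ^ 2 = 1)
    (htw : t * w * t⁻¹ = w ^ (u : ZMod n).val) :
    Multiplicative (ZMod n) ⋊[(zmodUnitsToMulAut n).comp (c2hom u hu)] Multiplicative (ZMod 2)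
      →* G :=
  SemidirectProduct.lift (zmodPowHom n w hw) (c2hom t ht) fun g => by
    refine MonoidHom.ext fun x => ?_
    obtain rfl | rfl : g = 1 ∨ g = ofAdd 1 := by revert g; decide
    · simp
    · simp only [MonoidHom.comp_apply, MulEquiv.coe_toMonoidHom, c2hom_ofAdd_one,
        MulAut.conj_apply]
      exact zmodPowHom_units_smul hw u htw x

end CyclicByTwo

lemma Subgroup.mem_zpowers_iff_of_sq_eq_one {G : Type*} [Group G] {g x : G} (hg : g ^ 2 = 1) :
    x ∈ Subgroup.zpowers g ↔ x = 1 ∨ x = g := by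
  refine ⟨?_, ?_⟩
  · rintro ⟨k, rfl⟩
    simp only [zpow_eq_zpow_emod' k hg]
    rcases Int.emod_two_eq_zero_or_one k with h | h <;> simp [h]
  · rintro (rfl | rfl)
    exacts [one_mem _, mem_zpowers _]

lemma Subgroup.eq_top_of_le_of_index_eq_two {G : Type*} [Group G] {H K : Subgroup G}
    (hH : H.index = 2) (hHK : H ≤ K) {w : G} (hwK : w ∈ K) (hwH : w ∉ H) : K = ⊤ := by
  refine (Subgroup.eq_top_iff' K).mpr fun e => ?_
  by_cases he : e ∈ H
  · exact hHK he
  · have : e * w⁻¹ ∈ H := by simp [Subgroup.mul_mem_iff_of_index_two hH, he, hwH]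
    simpa using K.mul_mem (hHK this) hwK

instance {N G : Type*} [Group N] [Group G] {φ : G →* MulAut N} [Fintype N] [Fintype G] :
    Fintype (N ⋊[φ] G) :=
  Fintype.ofEquiv _ SemidirectProduct.equivProd.symm

lemma nat_card_semidihedralGroup (d : ℕ) (hd : 2 ≤ d) :
    Nat.card (SemidihedralGroup d hd) = 2 ^ (d + 1) := by
  rw [SemidirectProduct.card]
  simp [pow_succ]

-- Mathlib's `decidableMemZPowers` is noncomputable and `leftRelDecidable` is defined by
-- rewriting, so neither reduces under `decide`.
instance (priority := high) groupBDecidableRel :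
    DecidableRel (QuotientGroup.leftRel (Subgroup.zpowers (cpGen 3))).r := fun x y =>
  decidable_of_iff (x⁻¹ * y = 1 ∨ x⁻¹ * y = cpGen 3) <| by
    rw [QuotientGroup.leftRel_apply, Subgroup.mem_zpowers_iff_of_sq_eq_one (by decide)]

instance (priority := high) : DecidableEq (GroupB 3) :=
  @Quotient.decidableEq _ _ groupBDecidableRel

namespace DihedralGroup

section Lift

variable {n : ℕ} {G : Type*} [Group G]

lemma closure_r_one_sr_zero : Subgroup.closure {r 1, sr 0} = (⊤ : Subgroup (DihedralGroup n)) := by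
  have hr : ∀ i : ZMod n, r i ∈ Subgroup.closure {r 1, sr (0 : ZMod n)} := by
    intro i
    obtain ⟨k, rfl⟩ := ZMod.intCast_surjective i
    rw [← r_one_zpow]
    exact Subgroup.zpow_mem _ (Subgroup.subset_closure (by simp)) k
  refine Subgroup.eq_top_iff' _ |>.mpr fun x => ?_
  cases x with
  | r i => exact hr i
  | sr i =>
    rw [show sr i = sr 0 * r i by rw [sr_mul_r, zero_add]]
    exact Subgroup.mul_mem _ (Subgroup.subset_closure (by simp)) (hr i)

lemma range_le_of_mem (ψ : DihedralGroup n →* G) {K : Subgroup G} (h₁ : ψ (r 1) ∈ K)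
    (h₂ : ψ (sr 0) ∈ K) : ψ.range ≤ K := by
  rw [MonoidHom.range_eq_map, ← closure_r_one_sr_zero, MonoidHom.map_closure,
    Subgroup.closure_le, Set.image_pair, Set.insert_subset_iff, Set.singleton_subset_iff]
  exact ⟨h₁, h₂⟩

variable [NeZero n] {a b : G}

def lift (ha : a ^ n = 1) (hb : b * b = 1) (hab : b * a * b = a⁻¹) : DihedralGroup n →* G where
  toFun
    | r i => zmodPowHom n a ha (ofAdd i)
    | sr i => b * zmodPowHom n a ha (ofAdd i)
  map_one' := map_one (zmodPowHom n a ha)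
  map_mul' x y := by
    set f := zmodPowHom n a ha
    have hb' : b⁻¹ = b := inv_eq_of_mul_eq_one_right hb
    have hflip : ∀ i : ZMod n, b * f (ofAdd i) * b = (f (ofAdd i))⁻¹ := by
      intro i
      change b * a ^ _ * b = (a ^ _)⁻¹
      have h := conj_pow (i := (toAdd (ofAdd i)).val) (a := b) (b := a)
      rwa [hb', hab, inv_pow, eq_comm] at h
    have hsub : ∀ i j : ZMod n, f (ofAdd (j - i)) = (f (ofAdd i))⁻¹ * f (ofAdd j) := by
      intro i j
      rw [sub_eq_neg_add, ofAdd_add, ofAdd_neg, map_mul, map_inv]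
    have hbb : ∀ x : G, b * (b * x) = x := fun x => by rw [← mul_assoc, hb, one_mul]
    cases x <;> cases y <;>
      simp only [r_mul_r, r_mul_sr, sr_mul_r, sr_mul_sr, ofAdd_add, map_mul, hsub, ← hflip] <;>
      simp only [mul_assoc, hbb]

@[simp] lemma lift_r_one (ha : a ^ n = 1) (hb : b * b = 1) (hab : b * a * b = a⁻¹) :
    lift ha hb hab (r 1) = a :=
  zmodPowHom_ofAdd_one ha

@[simp] lemma lift_sr_zero (ha : a ^ n = 1) (hb : b * b = 1) (hab : b * a * b = a⁻¹) :
    lift ha hb hab (sr 0) = b := by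
  simp [lift, zmodPowHom]

end Lift

lemma nonempty_mulEquiv_of_index_eq_two {n : ℕ} {E G : Type*} [Group E] [Group G] [Finite E]
    {ψ : DihedralGroup n →* E} (hψ : Function.Injective ψ) (hidx : ψ.range.index = 2)
    {w : E} (hw : w ∉ ψ.range) (F : G →* E) (hcard : Nat.card G = 4 * n)
    (h₁ : ψ (r 1) ∈ F.range) (h₂ : ψ (sr 0) ∈ F.range) (hwF : w ∈ F.range) :
    Nonempty (E ≃* G) := by
  have hsurj : Function.Surjective F := MonoidHom.range_eq_top.mp <|
    Subgroup.eq_top_of_le_of_index_eq_two hidx (range_le_of_mem ψ h₁ h₂) hwF hw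
  have hcardE : Nat.card E = 4 * n := by
    rw [← Subgroup.card_mul_index ψ.range, ← Nat.card_congr (MonoidHom.ofInjective hψ).toEquiv,
      hidx, nat_card]
    ring
  have : Finite G := Nat.finite_of_card_ne_zero (hcard ▸ hcardE ▸ Nat.card_pos.ne')
  exact ⟨(MulEquiv.ofBijective F ((Nat.bijective_iff_surjective_and_card F).mpr
    ⟨hsurj, hcard.trans hcardE.symm⟩)).symm⟩

lemma exists_conj_mulEquiv_eq (α : DihedralGroup 4 ≃* DihedralGroup 4) :
    ∃ d, d * α (r 1) * d⁻¹ = r 1 ∧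
      (d * α (sr 0) * d⁻¹ = sr 0 ∨ d * α (sr 0) * d⁻¹ = sr 1) := by
  have key : ∀ a b : DihedralGroup 4, a ^ 2 ≠ 1 → b * b = 1 → b * a * b = a⁻¹ →
      ∃ d, d * a * d⁻¹ = r 1 ∧ (d * b * d⁻¹ = sr 0 ∨ d * b * d⁻¹ = sr 1) := by
    decide
  apply key
  · rw [← map_pow, map_ne_one_iff α α.injective]
    decide
  · rw [← map_mul, sr_mul_self, map_one]
  · rw [← map_mul, ← map_mul, ← map_inv]
    exact congrArg α (by decide)

lemma eq_one_or_eq_r_two_of_commute : ∀ c : DihedralGroup 4,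
    c * r 1 = r 1 * c → c * sr 0 = sr 0 * c → c = 1 ∨ c = r 2 := by
  decide

lemma eq_r_one_or_eq_r_three_of_conj : ∀ c : DihedralGroup 4,
    c * r 1 = r 1 * c → c * sr 0 * c⁻¹ = sr 2 → c = r 1 ∨ c = r 3 := by
  decide

lemma exists_notMem_range_normalized {E : Type*} [Group E] {ψ : DihedralGroup 4 →* E}
    (hψ : Function.Injective ψ) (hidx : ψ.range.index = 2) :
    ∃ w ∉ ψ.range, Commute w (ψ (r 1)) ∧
      (w * ψ (sr 0) * w⁻¹ = ψ (sr 0) ∨ w * ψ (sr 0) * w⁻¹ = ψ (sr 1)) := by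
  have := Subgroup.normal_of_index_eq_two hidx
  obtain ⟨w₀, hw₀⟩ : ∃ w₀, w₀ ∉ ψ.range := by
    by_contra! h
    rw [(Subgroup.eq_top_iff' _).mpr h, Subgroup.index_top] at hidx
    omega
  set e := MonoidHom.ofInjective hψ
  set α := (e.trans (MulAut.conjNormal w₀)).trans e.symm
  have hα : ∀ x, ψ (α x) = w₀ * ψ x * w₀⁻¹ := fun x => by
    simp [α, e, MulAut.conjNormal_apply, MonoidHom.ofInjective_apply]
  obtain ⟨d, hr, ht⟩ := exists_conj_mulEquiv_eq α
  have hconj : ∀ x, ψ d * w₀ * ψ x * (ψ d * w₀)⁻¹ = ψ (d * α x * d⁻¹) := fun x => by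
    rw [map_mul, map_mul, hα, map_inv]
    group
  refine ⟨ψ d * w₀, fun h => hw₀ ?_, mul_inv_eq_iff_eq_mul.mp ((hconj _).trans (by rw [hr])), ?_⟩
  · simpa using ψ.range.mul_mem (ψ.mem_range.mpr ⟨d⁻¹, rfl⟩) h
  · simpa only [hconj, ht] using ht.imp (congrArg ψ) (congrArg ψ)

section Models

variable {E : Type*} [Group E] [Finite E] {ψ : DihedralGroup 4 →* E}
  (hψ : Function.Injective ψ) (hidx : ψ.range.index = 2) {w : E} (hw : w ∉ ψ.range)
include hψ hidx hw

lemma nonempty_mulEquiv_groupA (hcomm : ∀ x, Commute (ψ x) w) (hw2 : w ^ 2 = 1) :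
    Nonempty (E ≃* GroupA 3) := by
  let F := MonoidHom.noncommCoprod ψ (c2hom w hw2) fun x y =>
    show Commute (ψ x) (c2hom w hw2 y) from (hcomm x).pow_right _
  refine nonempty_mulEquiv_of_index_eq_two hψ hidx hw F (by rw [Nat.card_eq_fintype_card]; decide)
    ⟨(r 1, 1), ?_⟩ ⟨(sr 0, 1), ?_⟩ ⟨(1, ofAdd 1), ?_⟩ <;> simp [F, MonoidHom.noncommCoprod_apply]

lemma nonempty_mulEquiv_groupB (hcomm : ∀ x, Commute (ψ x) w) (hw2 : w ^ 2 = ψ (r 2)) :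
    Nonempty (E ≃* GroupB 3) := by
  have hr2 : ψ (r 2) * ψ (r 2) = 1 := by
    rw [← map_mul, show r 2 * r 2 = (1 : DihedralGroup 4) by decide, map_one]
  have hw4 : w ^ 4 = 1 := by rw [show 4 = 2 * 2 from rfl, pow_mul, hw2, sq, hr2]
  let F₀ := MonoidHom.noncommCoprod ψ (zmodPowHom 4 w hw4) fun x y =>
    show Commute (ψ x) (zmodPowHom 4 w hw4 y) from (hcomm x).pow_right _
  have hF₀ : Subgroup.zpowers (cpGen 3) ≤ F₀.ker := by
    rw [Subgroup.zpowers_le, MonoidHom.mem_ker]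
    change ψ (r 2) * w ^ 2 = 1
    rw [hw2, hr2]
  let F : GroupB 3 →* E := QuotientGroup.lift _ F₀ hF₀
  refine nonempty_mulEquiv_of_index_eq_two hψ hidx hw F (by rw [Nat.card_eq_fintype_card]; decide)
    ⟨QuotientGroup.mk (r 1, 1), ?_⟩ ⟨QuotientGroup.mk (sr 0, 1), ?_⟩
    ⟨QuotientGroup.mk (1, ofAdd 1), ?_⟩ <;> simp [F, F₀, MonoidHom.noncommCoprod_apply]

lemma nonempty_mulEquiv_semidihedralGroup (ht : w * ψ (sr 0) * w⁻¹ = ψ (sr 1))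
    (hw2 : w ^ 2 = ψ (r 1)) : Nonempty (E ≃* SemidihedralGroup 3 (by omega)) := by
  set t := ψ (sr 0)
  have ht2 : t ^ 2 = 1 := by rw [sq, ← map_mul, sr_mul_self, map_one]
  have hw8 : w ^ 2 ^ 3 = 1 := by
    rw [show 2 ^ 3 = 2 * 4 from rfl, pow_mul, hw2, ← map_pow, r_one_pow_n, map_one]
  have hwt : w * t = t * w ^ 3 := by
    rw [mul_inv_eq_iff_eq_mul.mp ht, ← zero_add 1, ← sr_mul_r, map_mul, ← hw2, mul_assoc,
      ← pow_succ]
  have htw : t * w * t⁻¹ = w ^ ((sdUnit 3 (by omega) : ZMod (2 ^ 3))).val := by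
    rw [inv_eq_of_mul_eq_one_right (sq t ▸ ht2), mul_assoc, hwt, ← mul_assoc, ← sq, ht2, one_mul]
    rfl
  let F := cyclicByTwoLift (sdUnit 3 (by omega)) (sdUnit_sq 3 (by omega)) hw8 ht2 htw
  have hwF : w ∈ F.range := ⟨SemidirectProduct.inl (ofAdd 1), by simp [F, cyclicByTwoLift]⟩
  exact nonempty_mulEquiv_of_index_eq_two hψ hidx hw F (nat_card_semidihedralGroup 3 _)
    (hw2 ▸ pow_mem hwF 2) ⟨SemidirectProduct.inr (ofAdd 1), by simp [F, cyclicByTwoLift, t]⟩ hwF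

lemma nonempty_mulEquiv_dihedralGroup (ht : w * ψ (sr 0) * w⁻¹ = ψ (sr 1))
    (hw2 : w ^ 2 = ψ (r 3)) : Nonempty (E ≃* DihedralGroup 8) := by
  set t := ψ (sr 0)
  have htt : t * t = 1 := by rw [← map_mul, sr_mul_self, map_one]
  have hw8 : w ^ 8 = 1 := by
    rw [show 8 = 2 * 4 from rfl, pow_mul, hw2, ← map_pow,
      show r 3 ^ 4 = (1 : DihedralGroup 4) by decide, map_one]
  have hr1 : ψ (r 1) = (w ^ 2)⁻¹ := by
    rw [hw2, ← map_inv, inv_r]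
    rfl
  have hwt : w * t = t * w⁻¹ := by
    rw [mul_inv_eq_iff_eq_mul.mp ht, ← zero_add 1, ← sr_mul_r, map_mul, hr1, mul_assoc, sq,
      mul_inv_rev, inv_mul_cancel_right]
  have htw : t * w * t = w⁻¹ := by
    rw [mul_assoc, hwt, ← mul_assoc, htt, one_mul]
  let F := lift hw8 htt htw
  have hwF : w ∈ F.range := ⟨r 1, lift_r_one hw8 htt htw⟩
  exact nonempty_mulEquiv_of_index_eq_two hψ hidx hw F (nat_card (n := 8))
    (hr1 ▸ inv_mem (pow_mem hwF 2)) ⟨sr 0, lift_sr_zero hw8 htt htw⟩ hwF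

end Models

theorem nonempty_mulEquiv_of_range_index_eq_two {E : Type*} [Group E] [Finite E]
    {ψ : DihedralGroup 4 →* E} (hψ : Function.Injective ψ) (hidx : ψ.range.index = 2) :
    Nonempty (E ≃* GroupA 3) ∨ Nonempty (E ≃* GroupB 3) ∨ Nonempty (E ≃* DihedralGroup 8) ∨
      Nonempty (E ≃* SemidihedralGroup 3 (by omega)) := by
  obtain ⟨w, hw, hr, ht⟩ := exists_notMem_range_normalized hψ hidx
  obtain ⟨c, hc⟩ := Subgroup.sq_mem_of_index_two hidx w
  have hcr : c * r 1 = r 1 * c := hψ <| by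
    simp only [map_mul, hc]
    exact (hr.pow_left 2).eq
  rcases ht with ht | ht
  · have hcomm : ∀ x, Commute (ψ x) w := fun x =>
      Subgroup.mem_centralizer_singleton_iff.mp <|
        range_le_of_mem ψ (K := Subgroup.centralizer {w})
          (Subgroup.mem_centralizer_singleton_iff.mpr hr.eq.symm)
          (Subgroup.mem_centralizer_singleton_iff.mpr (mul_inv_eq_iff_eq_mul.mp ht).symm)
          ⟨x, rfl⟩
    have hct : c * sr 0 = sr 0 * c := hψ <| by
      simp only [map_mul, hc]
      exact ((hcomm (sr 0)).pow_right 2).eq.symm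
    rcases eq_one_or_eq_r_two_of_commute c hcr hct with rfl | rfl
    · exact .inl (nonempty_mulEquiv_groupA hψ hidx hw hcomm (by rw [← hc, map_one]))
    · exact .inr (.inl (nonempty_mulEquiv_groupB hψ hidx hw hcomm hc.symm))
  · have hct : c * sr 0 * c⁻¹ = sr 2 := hψ <| by
      have hκr : MulAut.conj w (ψ (r 1)) = ψ (r 1) := by
        rw [MulAut.conj_apply, hr.eq, mul_inv_cancel_right]
      have hκt : MulAut.conj w (ψ (sr 0)) = ψ (sr 1) := ht
      rw [map_mul, map_mul, map_inv, hc, ← MulAut.conj_apply, map_pow, sq, MulAut.mul_apply, hκt,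
        ← zero_add 1, ← sr_mul_r, map_mul, map_mul, hκt, hκr, ← map_mul, sr_mul_r]
      rfl
    rcases eq_r_one_or_eq_r_three_of_conj c hcr hct with rfl | rfl
    · exact .inr (.inr (.inr (nonempty_mulEquiv_semidihedralGroup hψ hidx hw ht hc.symm)))
    · exact .inr (.inr (.inl (nonempty_mulEquiv_dihedralGroup hψ hidx hw ht hc.symm)))

end DihedralGroup

lemma MulEquiv.card_mul_self_eq_one {G H : Type*} [Group G] [Group H] [Fintype G] [Fintype H]
    [DecidableEq G] [DecidableEq H] (e : G ≃* H) :
    Fintype.card {x : G // x * x = 1} = Fintype.card {y : H // y * y = 1} :=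
  Fintype.card_congr <| e.toEquiv.subtypeEquiv fun x => by
    change x * x = 1 ↔ e x * e x = 1
    rw [← map_mul, MulEquiv.map_eq_one_iff]

lemma pairwise_isEmpty_mulEquiv :
    IsEmpty (GroupA 3 ≃* GroupB 3) ∧
    IsEmpty (GroupA 3 ≃* DihedralGroup 8) ∧
    IsEmpty (GroupA 3 ≃* SemidihedralGroup 3 (by omega)) ∧
    IsEmpty (GroupB 3 ≃* DihedralGroup 8) ∧
    IsEmpty (GroupB 3 ≃* SemidihedralGroup 3 (by omega)) ∧
    IsEmpty (DihedralGroup 8 ≃* SemidihedralGroup 3 (by omega)) := by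
  have hA : Fintype.card {x : GroupA 3 // x * x = 1} = 12 := by decide
  have hB : Fintype.card {x : GroupB 3 // x * x = 1} = 8 := by decide
  have hD : Fintype.card {x : DihedralGroup 8 // x * x = 1} = 10 := by decide
  have hS : Fintype.card {x : SemidihedralGroup 3 (by omega) // x * x = 1} = 6 := by decide
  refine ⟨⟨fun e => ?_⟩, ⟨fun e => ?_⟩, ⟨fun e => ?_⟩, ⟨fun e => ?_⟩, ⟨fun e => ?_⟩,
    ⟨fun e => ?_⟩⟩ <;> have := e.card_mul_self_eq_one <;> omega

/-- Let `E` be a finite group having a subgroup `D` of index `2` with `D` isomorphic to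
the dihedral group `D₈` of order `8` (i.e. `DihedralGroup 4`).  Then `E` is isomorphic to
exactly one of the following four pairwise non-isomorphic groups: `D₈ × C₂`; the central
product `D₈ ∘ C₄`; the dihedral group `D₁₆` of order `16`; and the semidihedral group
`SD₁₆ = ⟨x, y ∣ x⁸ = y² = 1, y x y⁻¹ = x³⟩`.  (Here `GroupA 3 = D₈ × C₂`,
`GroupB 3 = D₈ ∘ C₄`, `DihedralGroup 8 = D₁₆` and `SemidihedralGroup 3 _ = SD₁₆`.) -/
theorem degree_two_extensions_of_D8 (E : Type*) [Group E] [Finite E]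
    (D : Subgroup E) (hDindex : D.index = 2)
    (hiso : Nonempty (D ≃* DihedralGroup 4)) :
    (Nonempty (E ≃* GroupA 3) ∨
     Nonempty (E ≃* GroupB 3) ∨
     Nonempty (E ≃* DihedralGroup 8) ∨
     Nonempty (E ≃* SemidihedralGroup 3 (by omega))) ∧
    (IsEmpty (GroupA 3 ≃* GroupB 3) ∧
     IsEmpty (GroupA 3 ≃* DihedralGroup 8) ∧
     IsEmpty (GroupA 3 ≃* SemidihedralGroup 3 (by omega)) ∧
     IsEmpty (GroupB 3 ≃* DihedralGroup 8) ∧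
     IsEmpty (GroupB 3 ≃* SemidihedralGroup 3 (by omega)) ∧
     IsEmpty (DihedralGroup 8 ≃* SemidihedralGroup 3 (by omega))) := by
  obtain ⟨φ⟩ := hiso
  let ψ := D.subtype.comp φ.symm.toMonoidHom
  have hrange : ψ.range = D := by
    rw [MonoidHom.range_comp, MonoidHom.range_eq_top.mpr φ.symm.surjective,
      ← MonoidHom.range_eq_map, Subgroup.range_subtype]
  exact ⟨DihedralGroup.nonempty_mulEquiv_of_range_index_eq_two
    (D.subtype_injective.comp φ.symm.injective) (hrange ▸ hDindex), pairwise_isEmpty_mulEquiv⟩
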